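/- Let M be a projective right R-module. Then M is principally δ-semiperfect if and only if M is principally δ-lifting. -/

import Mathlib

/-- A submodule `K` of `M` is *essential* in `M` if it has nonzero intersection with
every nonzero submodule of `M`. -/
def IsEssentialSubmodule {R M : Type*} [Ring R] [AddCommGroup M] [Module R M]
    (K : Submodule R M) : Prop :=
  ∀ N : Submodule R M, N ≠ ⊥ → K ⊓ N ≠ ⊥

/-- A module `M` is *singular* if the annihilator of every element of `M` is an
essential ideal of `R`. -/
def IsSingularModule (R M : Type*) [Ring R] [AddCommGroup M] [Module R M] : Prop :=
  ∀ x : M, IsEssentialSubmodule (LinearMap.ker (LinearMap.toSpanSingleton R M x))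

/-- A submodule `N` of `M` is *δ-small* in `M` if whenever `M = N + X` with `M/X`
singular, we have `X = M`. -/
def IsDeltaSmall (R : Type*) {M : Type*} [Ring R] [AddCommGroup M] [Module R M]
    (N : Submodule R M) : Prop :=
  ∀ X : Submodule R M, N ⊔ X = ⊤ → IsSingularModule R (M ⧸ X) → X = ⊤

/-- A module `M` is *principally δ-lifting* if for each `m ∈ M` there is a
decomposition `M = A ⊕ B` with `A ≤ mR` and `mR ∩ B` δ-small in `B`. -/
def IsPrinDeltaLifting (R M : Type*) [Ring R] [AddCommGroup M] [Module R M] : Prop :=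
  ∀ m : M, ∃ A B : Submodule R M, A ≤ Submodule.span R {m} ∧ IsCompl A B ∧
    IsDeltaSmall R ((Submodule.span R {m} ⊓ B).comap B.subtype)

universe uR uX uP

/-- A *projective δ-cover* of a module `X`: a projective module `P` together with a
surjective homomorphism `f : P → X` whose kernel is δ-small in `P`. -/
structure ProjectiveDeltaCover (R : Type uR) (X : Type uX) [Ring R]
    [AddCommGroup X] [Module R X] : Type (max uR uX (uP + 1)) where
  P : Type uP
  [addCommGroup : AddCommGroup P]
  [module : Module R P]
  projective : Module.Projective R P
  f : P →ₗ[R] X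
  surjective : Function.Surjective f
  ker_deltaSmall : IsDeltaSmall R (LinearMap.ker f)

/-- A module `M` is *principally δ-semiperfect* if for each `m ∈ M` the factor module
`M/mR` has a projective δ-cover. -/
def IsPrinDeltaSemiperfect (R : Type uR) (M : Type uX) [Ring R] [AddCommGroup M]
    [Module R M] : Prop :=
  ∀ m : M, Nonempty (ProjectiveDeltaCover.{uR, uX, uP} R (M ⧸ Submodule.span R {m}))

/-! Lift the quotient map `M → M/mR` through a projective δ-cover `f : P → M/mR` to
`h : M → P`. Then `range h + ker f = P`; a submodule of `ker f` maximal among those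
independent of `range h` makes the quotient by their sum singular, so δ-smallness of `ker f`
turns it into a complement of `range h`. Thus `range h` is projective, `M = ker h ⊕ B` with
`ker h ≤ mR`, and `h` identifies `mR ∩ B` with `ker f ∩ range h`, which is δ-small in the
summand `range h`. Conversely, if `M = A ⊕ B` with `A ≤ mR`, then `B → M/mR` is a projective
δ-cover with kernel `mR ∩ B`. -/

open Submodule LinearMap

section Modules

variable {R M M' : Type*} [Ring R] [AddCommGroup M] [Module R M] [AddCommGroup M'] [Module R M']

theorem Submodule.comap_subtype_inf_right (N B : Submodule R M) :
    (N ⊓ B).comap B.subtype = N.comap B.subtype := by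
  rw [comap_inf, comap_subtype_self, inf_top_eq]

theorem IsEssentialSubmodule.mono {K K' : Submodule R M} (hK : IsEssentialSubmodule K)
    (h : K ≤ K') : IsEssentialSubmodule K' :=
  fun N hN hbot => hK N hN (le_bot_iff.mp (hbot ▸ inf_le_inf_right N h))

theorem isSingularModule_quotient_iff (X : Submodule R M) :
    IsSingularModule R (M ⧸ X) ↔
      ∀ x : M, IsEssentialSubmodule (X.comap (toSpanSingleton R M x)) := by
  have hker (x : M) :
      ker (toSpanSingleton R (M ⧸ X) (X.mkQ x)) = X.comap (toSpanSingleton R M x) := by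
    rw [← comp_toSpanSingleton, ker_comp, ker_mkQ]
  exact ⟨fun h x => hker x ▸ h _, fun h => X.mkQ_surjective.forall.mpr fun x => hker x ▸ h x⟩

theorem isEssentialSubmodule_comap_toSpanSingleton {W N : Submodule R M}
    (hW : ∀ K ≤ N, K ≠ ⊥ → W ⊓ K ≠ ⊥) {n : M} (hn : n ∈ N) :
    IsEssentialSubmodule (W.comap (toSpanSingleton R M n)) := by
  intro I hI
  by_cases hIn : I.map (toSpanSingleton R M n) = ⊥
  · have hIW : I ≤ W.comap (toSpanSingleton R M n) :=
      (le_ker_iff_map.mpr hIn).trans (comap_bot (toSpanSingleton R M n) ▸ comap_mono bot_le)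
    rwa [inf_eq_right.mpr hIW]
  · have hWI := hW _ (map_le_iff_le_comap.mpr fun r _ => by simpa using N.smul_mem r hn) hIn
    rw [inf_comm, map_inf_eq_map_inf_comap, inf_comm] at hWI
    exact fun h => hWI (by rw [h, Submodule.map_bot])

theorem isSingularModule_quotient_of_sup_eq_top {W N : Submodule R M} (hsup : W ⊔ N = ⊤)
    (hW : ∀ K ≤ N, K ≠ ⊥ → W ⊓ K ≠ ⊥) : IsSingularModule R (M ⧸ W) := by
  refine (isSingularModule_quotient_iff W).mpr fun x => ?_
  obtain ⟨w, hw, n, hn, rfl⟩ := mem_sup.mp (hsup ▸ mem_top : x ∈ W ⊔ N)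
  refine (isEssentialSubmodule_comap_toSpanSingleton hW hn).mono fun r hr => ?_
  simp only [mem_comap, toSpanSingleton_apply, smul_add] at hr ⊢
  exact W.add_mem (W.smul_mem r hw) hr


theorem IsDeltaSmall.map_of_surjective {N : Submodule R M} (hN : IsDeltaSmall R N)
    {g : M →ₗ[R] M'} (hg : Function.Surjective g) : IsDeltaSmall R (N.map g) := by
  intro X hsup hsing
  have hsup' : N ⊔ X.comap g = ⊤ := by
    have hmap : (N ⊔ X.comap g).map g = ⊤ := by
      rw [Submodule.map_sup, map_comap_eq_of_surjective hg, hsup]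
    rw [← comap_map_eq_self (f := g) (le_sup_of_le_right (comap_bot g ▸ comap_mono bot_le)), hmap,
      comap_top]
  have hsing' : IsSingularModule R (M ⧸ X.comap g) := by
    rw [isSingularModule_quotient_iff] at hsing ⊢
    intro x
    rw [← comap_comp, comp_toSpanSingleton]
    exact hsing (g x)
  exact comap_injective_of_surjective hg (by rw [hN _ hsup' hsing', comap_top])

theorem IsDeltaSmall.comap_equiv {N : Submodule R M'} (hN : IsDeltaSmall R N)
    (e : M ≃ₗ[R] M') : IsDeltaSmall R (N.comap (e : M →ₗ[R] M')) := by
  rw [comap_equiv_eq_map_symm]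
  exact hN.map_of_surjective e.symm.surjective

theorem IsDeltaSmall.comap_subtype_of_isCompl {N P Y : Submodule R M} (hN : IsDeltaSmall R N)
    (hPY : IsCompl P Y) (hY : Y ≤ N) : IsDeltaSmall R (N.comap P.subtype) := by
  have hproj : N.map (P.projectionOnto Y hPY) = N.comap P.subtype := by
    ext p
    refine ⟨?_, fun hp => ⟨p, hp, projectionOnto_apply_left hPY p⟩⟩
    rintro ⟨n, hn, rfl⟩
    have hsub := hY (sub_projection_mem hPY n)
    rw [mem_comap, subtype_apply, coe_projectionOnto_apply]
    simpa using N.sub_mem hn hsub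
  exact hproj ▸ hN.map_of_surjective (projectionOnto_surjective hPY)

theorem IsDeltaSmall.exists_isCompl_le {N : Submodule R M} (hN : IsDeltaSmall R N)
    {X : Submodule R M} (hX : X ⊔ N = ⊤) : ∃ Y ≤ N, IsCompl X Y := by
  obtain ⟨Y, ⟨hYN, hXY⟩, hmax⟩ :=
    zorn_le₀ {Y : Submodule R M | Y ≤ N ∧ Disjoint X Y} fun c hc hchain =>
      ⟨sSup c, ⟨sSup_le fun Y hY => (hc hY).1,
        hchain.directedOn.disjoint_sSup_right.mpr fun Y hY => (hc hY).2⟩,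
        fun _ => le_sSup⟩
  have hess : ∀ K ≤ N, K ≠ ⊥ → (X ⊔ Y) ⊓ K ≠ ⊥ := by
    intro K hKN hK hXYK
    have hKY : K ≤ Y := le_sup_right.trans <| hmax
      ⟨sup_le hYN hKN, hXY.disjoint_sup_right_of_disjoint_sup_left (disjoint_iff.mpr hXYK)⟩
      le_sup_left
    exact hK (by rwa [inf_eq_right.mpr (hKY.trans le_sup_right)] at hXYK)
  have hXYN : X ⊔ Y ⊔ N = ⊤ := top_le_iff.mp (hX ▸ sup_le_sup_right le_sup_left N)
  have hXYtop : X ⊔ Y = ⊤ :=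
    hN _ (by rwa [sup_comm]) (isSingularModule_quotient_of_sup_eq_top hXYN hess)
  exact ⟨Y, hYN, hXY, codisjoint_iff.mpr hXYtop⟩


theorem Module.Projective.of_isCompl [Module.Projective R M] {P Q : Submodule R M}
    (h : IsCompl P Q) : Module.Projective R P :=
  .of_split P.subtype (P.projectionOnto Q h) (by ext x; simp [projectionOnto_apply_left])

theorem LinearMap.exists_isCompl_ker (f : M →ₗ[R] M') [Module.Projective R (range f)] :
    ∃ B : Submodule R M, IsCompl B (ker f) := by
  obtain ⟨s, hs⟩ :=
    Module.projective_lifting_property f.rangeRestrict LinearMap.id f.surjective_rangeRestrict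
  have hidem : IsIdempotentElem (s ∘ₗ f.rangeRestrict) := by
    rw [IsIdempotentElem, Module.End.mul_eq_comp, comp_assoc, ← comp_assoc f.rangeRestrict, hs,
      id_comp]
  have hker : ker (s ∘ₗ f.rangeRestrict) = ker f := by
    rw [ker_comp, ker_eq_bot_of_inverse hs, comap_bot, ker_rangeRestrict]
  exact ⟨_, hker ▸ hidem.isCompl⟩

theorem IsDeltaSmall.comap_subtype_of_isCompl_ker {f : M →ₗ[R] M'} {B : Submodule R M}
    (hB : IsCompl B (ker f)) {K : Submodule R M'}
    (hK : IsDeltaSmall R (K.comap (range f).subtype)) :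
    IsDeltaSmall R ((K.comap f).comap B.subtype) := by
  have hKB : (K.comap f).comap B.subtype =
      (K.comap (range f).subtype).comap (f.kerComplementEquivRange hB : B →ₗ[R] range f) := by
    ext x
    simp only [mem_comap, subtype_apply, LinearEquiv.coe_coe, kerComplementEquivRange_apply_coe]
  rw [hKB]
  exact hK.comap_equiv _

theorem LinearMap.range_sup_ker_eq_top_of_surjective_comp {M'' : Type*} [AddCommGroup M'']
    [Module R M''] {f : M' →ₗ[R] M''} {h : M →ₗ[R] M'} (hfh : Function.Surjective (f ∘ₗ h)) :
    range h ⊔ ker f = ⊤ := by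
  rw [← comap_map_eq, ← range_comp, range_eq_top.mpr hfh, comap_top]

end Modules

namespace ProjectiveDeltaCover

variable {R M : Type*} [Ring R] [AddCommGroup M] [Module R M] [Module.Projective R M]

theorem exists_isCompl {N : Submodule R M} (C : ProjectiveDeltaCover R (M ⧸ N)) :
    ∃ A B : Submodule R M, A ≤ N ∧ IsCompl A B ∧ IsDeltaSmall R ((N ⊓ B).comap B.subtype) := by
  let := C.addCommGroup
  let := C.module
  have := C.projective
  obtain ⟨h, hh⟩ := Module.projective_lifting_property C.f N.mkQ C.surjective
  have hN : (ker C.f).comap h = N := by rw [← ker_comp, hh, ker_mkQ]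
  obtain ⟨Y, hY, hcompl⟩ := C.ker_deltaSmall.exists_isCompl_le
    (range_sup_ker_eq_top_of_surjective_comp (hh ▸ N.mkQ_surjective))
  have := Module.Projective.of_isCompl hcompl
  obtain ⟨B, hB⟩ := h.exists_isCompl_ker
  refine ⟨ker h, B, (comap_mono bot_le).trans hN.le, hB.symm, ?_⟩
  rw [comap_subtype_inf_right, ← hN]
  exact (C.ker_deltaSmall.comap_subtype_of_isCompl hcompl hY).comap_subtype_of_isCompl_ker hB

def ofIsCompl {N A B : Submodule R M} (hA : A ≤ N) (hAB : IsCompl A B)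
    (hB : IsDeltaSmall R ((N ⊓ B).comap B.subtype)) : ProjectiveDeltaCover R (M ⧸ N) where
  P := B
  projective := .of_isCompl hAB.symm
  f := N.mkQ ∘ₗ B.subtype
  surjective := by
    rw [← range_eq_top, range_comp, range_subtype, map_mkQ_eq_top]
    exact top_le_iff.mp (hAB.sup_eq_top ▸ sup_le_sup_right hA B)
  ker_deltaSmall := by
    rwa [ker_comp, ker_mkQ, ← comap_subtype_inf_right]

end ProjectiveDeltaCover

theorem projective_isPrinDeltaSemiperfect_iff_isPrinDeltaLifting
    {R : Type uR} {M : Type uX} [Ring R] [AddCommGroup M] [Module R M]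
    (hproj : Module.Projective R M) :
    IsPrinDeltaSemiperfect.{uR, uX, uX} R M ↔ IsPrinDeltaLifting R M := by
  refine ⟨fun h m => (h m).some.exists_isCompl, fun h m => ?_⟩
  obtain ⟨A, B, hA, hAB, hB⟩ := h m
  exact ⟨.ofIsCompl hA hAB hB⟩
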